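/- arXiv:2505.00908 — 5 statements merged into one kernel-verified Lean document; each statement's English description precedes it below -/
import Mathlib

section
/- Let α : ℝ → ℝ be a locally Lipschitz extended class-K∞ function, i.e. α is strictly monotone increasing and α(0) = 0. Let T > 0 and let b : ℝ → ℝ be differentiable on [0, T] with b(0) ≥ 0 and satisfying the differential inequality deriv b t ≥ -α(b t) for all t ∈ [0, T]. Then b(t) ≥ 0 for all t ∈ [0, T]. -/
/-- Scalar comparison lemma underlying the forward-invariance theorem for
control barrier functions: if `α` is a locally Lipschitz extended class-K∞
function (strictly increasing with `α 0 = 0`), `b` is differentiable on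
`[0, T]` with `b 0 ≥ 0` and `deriv b t ≥ -α (b t)` on `[0, T]`, then
`b t ≥ 0` on `[0, T]`. -/
theorem ccbf_comparison_lemma
    (α : ℝ → ℝ) (hα_lip : LocallyLipschitz α) (hα_mono : StrictMono α)
    (hα0 : α 0 = 0)
    (T : ℝ) (hT : 0 < T)
    (b : ℝ → ℝ) (hb : DifferentiableOn ℝ b (Set.Icc 0 T))
    (hb0 : 0 ≤ b 0)
    (hineq : ∀ t ∈ Set.Icc 0 T, -α (b t) ≤ deriv b t) :
    ∀ t ∈ Set.Icc 0 T, 0 ≤ b t := by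
  intro t0 ht0
  by_contra hneg
  push_neg at hneg
  have hcont : ContinuousOn b (Set.Icc 0 T) := hb.continuousOn
  set S : Set ℝ := {t | t ∈ Set.Icc 0 t0 ∧ 0 ≤ b t} with hS
  have hsub : Set.Icc 0 t0 ⊆ Set.Icc 0 T := Set.Icc_subset_Icc le_rfl ht0.2
  have hSclosed : IsClosed S := by
    have : S = Set.Icc 0 t0 ∩ (Set.Icc 0 t0 ∩ b ⁻¹' Set.Ici 0) := by
      ext x
      simp only [hS, Set.mem_setOf_eq, Set.mem_inter_iff, Set.mem_preimage, Set.mem_Ici]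
      tauto
    rw [this]
    exact isClosed_Icc.inter
      ((hcont.mono hsub).preimage_isClosed_of_isClosed isClosed_Icc isClosed_Ici)
  have hSbdd : BddAbove S := ⟨t0, fun x hx => hx.1.2⟩
  have hSne : S.Nonempty := ⟨0, ⟨le_rfl, ht0.1⟩, hb0⟩
  set s := sSup S with hs
  have hsS : s ∈ S := hSclosed.csSup_mem hSne hSbdd
  have hbs : 0 ≤ b s := hsS.2
  have hst0 : s < t0 := by
    rcases lt_or_eq_of_le hsS.1.2 with h | h
    · exact h
    · exact absurd (h ▸ hbs) (not_le.2 hneg)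
  -- on (s, t0], b is negative
  have hbneg : ∀ x ∈ Set.Ioc s t0, b x < 0 := by
    intro x hx
    by_contra hge
    push_neg at hge
    have : x ∈ S := ⟨⟨le_trans hsS.1.1 hx.1.le, hx.2⟩, hge⟩
    exact absurd (le_csSup hSbdd this) (not_le.2 hx.1)
  -- deriv positive on interior
  have hmono : StrictMonoOn b (Set.Icc s t0) := by
    apply strictMonoOn_of_deriv_pos (convex_Icc s t0)
    · exact hcont.mono (Set.Icc_subset_Icc hsS.1.1 ht0.2)
    · intro x hx
      rw [interior_Icc] at hx
      have hxT : x ∈ Set.Icc 0 T :=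
        ⟨le_trans hsS.1.1 hx.1.le, le_trans hx.2.le ht0.2⟩
      have hbx : b x < 0 := hbneg x ⟨hx.1, hx.2.le⟩
      have : α (b x) < 0 := hα0 ▸ hα_mono hbx
      linarith [hineq x hxT]
  have := hmono (Set.left_mem_Icc.2 hst0.le) (Set.right_mem_Icc.2 hst0.le) hst0
  linarith
end

section
/- Consider the control-affine system ẋ = f(x) + g(x)u on ℝⁿ with control u ∈ ℝᵐ, where f : ℝⁿ → ℝⁿ and g : ℝⁿ → ℝⁿˣᵐ (matrices) are locally Lipschitz. Let B : ℝⁿ → ℝ be continuously differentiable, let α : ℝ → ℝ be a locally Lipschitz extended class-K∞ function, and let π : ℝⁿ → ℝᵐ be a locally Lipschitz policy such that for every x ∈ ℝⁿ, ⟪∇B(x), f(x) + g(x)·π(x)⟫ + α(B(x)) ≥ 0. If x : [0, ∞) → ℝⁿ is differentiable and satisfies the closed-loop ODE x'(t) = f(x(t)) + g(x(t))·π(x(t)) for all t ≥ 0, and B(x(0)) ≥ 0, then B(x(t)) ≥ 0 for all t ≥ 0; that is, the superlevel set B_{≥0} := {x | B(x) ≥ 0} is forward invariant under the policy π. -/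
/-!
Along the closed-loop trajectory, `y t = B (x t)` satisfies `y' ≥ -α y`. Since `α` is strictly
increasing with `α 0 = 0`, `y' > 0` wherever `y < 0`, so `y` can never cross the level `-ε`
from above for any `ε > 0`; hence `y ≥ 0` for all time.
-/

open scoped RealInnerProductSpace

attribute [local instance] Matrix.normedAddCommGroup

theorem HasGradientAt.comp_hasDerivAt {E : Type*} [NormedAddCommGroup E] [InnerProductSpace ℝ E]
    [CompleteSpace E] {B : E → ℝ} {b : E} {x : ℝ → E} {v : E} {t : ℝ}
    (hB : HasGradientAt B b (x t)) (hx : HasDerivAt x v t) :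
    HasDerivAt (B ∘ x) ⟪b, v⟫ t := by
  have h := hB.hasFDerivAt.comp_hasDerivAt t hx
  rwa [InnerProductSpace.toDual_apply_apply] at h

theorem nonneg_of_hasDerivAt_pos_of_neg {y y' : ℝ → ℝ} {a : ℝ}
    (hy : ∀ t, a ≤ t → HasDerivAt y (y' t) t) (hpos : ∀ t, a ≤ t → y t < 0 → 0 < y' t)
    (ha : 0 ≤ y a) : ∀ t, a ≤ t → 0 ≤ y t := by
  intro t hat
  refine le_of_forall_pos_le_add fun ε hε => ?_
  have hfence : -y t ≤ ε :=
    image_le_of_deriv_right_lt_deriv_boundary' (f := -y) (f' := -y') (B := fun _ => ε) (B' := 0)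
      (fun s hs => (hy s hs.1).neg.continuousAt.continuousWithinAt)
      (fun s hs => (hy s hs.1).neg.hasDerivWithinAt) (by simp only [Pi.neg_apply]; linarith)
      continuousOn_const (fun _ _ => hasDerivWithinAt_const _ _ _)
      (fun s hs hsε => by
        simp only [Pi.neg_apply, Pi.zero_apply] at hsε ⊢
        exact neg_neg_of_pos (hpos s hs.1 (by linarith)))
      ⟨hat, le_rfl⟩
  linarith

theorem cbf_forward_invariance_general
    (n m : ℕ)
    (f : EuclideanSpace ℝ (Fin n) → EuclideanSpace ℝ (Fin n))
    (g : EuclideanSpace ℝ (Fin n) → Matrix (Fin n) (Fin m) ℝ)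
    (B : EuclideanSpace ℝ (Fin n) → ℝ) (hB : ContDiff ℝ 1 B)
    (α : ℝ → ℝ) (hα_mono : StrictMono α)
    (hα0 : α 0 = 0)
    (π : EuclideanSpace ℝ (Fin n) → EuclideanSpace ℝ (Fin m))
    (hcbf : ∀ p : EuclideanSpace ℝ (Fin n),
      0 ≤ ⟪gradient B p, f p +
          (EuclideanSpace.equiv (Fin n) ℝ).symm
            ((g p).mulVec (EuclideanSpace.equiv (Fin m) ℝ (π p)))⟫ + α (B p))
    (x : ℝ → EuclideanSpace ℝ (Fin n))
    (hx : ∀ t, 0 ≤ t → HasDerivAt x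
      (f (x t) + (EuclideanSpace.equiv (Fin n) ℝ).symm
        ((g (x t)).mulVec (EuclideanSpace.equiv (Fin m) ℝ (π (x t))))) t)
    (hx0 : 0 ≤ B (x 0)) :
    ∀ t, 0 ≤ t → 0 ≤ B (x t) := by
  have hBx : ∀ t, 0 ≤ t → HasDerivAt (B ∘ x) ⟪gradient B (x t), f (x t) +
      (EuclideanSpace.equiv (Fin n) ℝ).symm
        ((g (x t)).mulVec (EuclideanSpace.equiv (Fin m) ℝ (π (x t))))⟫ t := fun t ht =>
    ((hB.differentiable one_ne_zero) (x t)).hasGradientAt.comp_hasDerivAt (hx t ht)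
  refine nonneg_of_hasDerivAt_pos_of_neg hBx (fun t _ hneg => ?_) hx0
  have hα_neg : α (B (x t)) < 0 := hα0 ▸ hα_mono hneg
  linarith [hcbf (x t)]

/-- Forward invariance of the superlevel set `{x | B x ≥ 0}` of a control
barrier function `B` under a policy `π` satisfying the CBF condition
`⟪∇B(x), f(x) + g(x)·π(x)⟫ + α(B(x)) ≥ 0` for the control-affine system
`ẋ = f(x) + g(x)u`. -/
theorem cbf_forward_invariance
    (n m : ℕ)
    (f : EuclideanSpace ℝ (Fin n) → EuclideanSpace ℝ (Fin n))
    (g : EuclideanSpace ℝ (Fin n) → Matrix (Fin n) (Fin m) ℝ)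
    (hf : LocallyLipschitz f) (hg : LocallyLipschitz g)
    (B : EuclideanSpace ℝ (Fin n) → ℝ) (hB : ContDiff ℝ 1 B)
    (α : ℝ → ℝ) (hα_lip : LocallyLipschitz α) (hα_mono : StrictMono α)
    (hα0 : α 0 = 0)
    (π : EuclideanSpace ℝ (Fin n) → EuclideanSpace ℝ (Fin m))
    (hπ : LocallyLipschitz π)
    (hcbf : ∀ p : EuclideanSpace ℝ (Fin n),
      0 ≤ ⟪gradient B p, f p +
          (EuclideanSpace.equiv (Fin n) ℝ).symm
            ((g p).mulVec (EuclideanSpace.equiv (Fin m) ℝ (π p)))⟫ + α (B p))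
    (x : ℝ → EuclideanSpace ℝ (Fin n))
    (hx : ∀ t, 0 ≤ t → HasDerivAt x
      (f (x t) + (EuclideanSpace.equiv (Fin n) ℝ).symm
        ((g (x t)).mulVec (EuclideanSpace.equiv (Fin m) ℝ (π (x t))))) t)
    (hx0 : 0 ≤ B (x 0)) :
    ∀ t, 0 ≤ t → 0 ≤ B (x t) :=
  cbf_forward_invariance_general n m f g B hB α hα_mono hα0 π hcbf x hx hx0
end

section
/- Under the hypotheses of the forward-invariance theorem for control barrier functions (control-affine dynamics ẋ = f(x) + g(x)u with locally Lipschitz f, g; B : ℝⁿ → ℝ continuously differentiable; α : ℝ → ℝ a locally Lipschitz extended class-K∞ function; π : ℝⁿ → ℝᵐ locally Lipschitz with ⟪∇B(x), f(x) + g(x)·π(x)⟫ + α(B(x)) ≥ 0 for all x), suppose additionally that a failure set F ⊆ ℝⁿ is disjoint from the superlevel set B_{≥0} = {x | B(x) ≥ 0}. Then every differentiable solution x : [0, ∞) → ℝⁿ of the closed-loop ODE x'(t) = f(x(t)) + g(x(t))·π(x(t)) with B(x(0)) ≥ 0 satisfies x(t) ∉ F for all t ≥ 0. -/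
open scoped RealInnerProductSpace

open Set

attribute [local instance] Matrix.normedAddCommGroup

/-! If `B (x t) < 0` at some time `t`, take the last time `c ≤ t` with `B (x c) ≥ 0`. On `(c, t]`
the barrier condition gives `d/ds B (x s) ≥ -α (B (x s)) > 0`, so by the mean value theorem
`B (x t) > B (x c) ≥ 0`, a contradiction. Hence the solution stays in `{B ≥ 0}`, which misses `F`. -/

theorem nonneg_of_hasDerivAt_pos_of_neg_s2 {φ φ' : ℝ → ℝ} {a b : ℝ}
    (hφ : ContinuousOn φ (Icc a b)) (hφ' : ∀ s ∈ Ioo a b, HasDerivAt φ (φ' s) s)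
    (ha : 0 ≤ φ a) (hpos : ∀ s ∈ Ioo a b, φ s < 0 → 0 < φ' s) :
    ∀ t ∈ Icc a b, 0 ≤ φ t := by
  intro t ht
  by_contra! hneg
  set S := Icc a t ∩ φ ⁻¹' Ici 0
  have hS_closed : IsClosed S :=
    (hφ.mono (Icc_subset_Icc_right ht.2)).preimage_isClosed_of_isClosed isClosed_Icc isClosed_Ici
  have hS_ne : S.Nonempty := ⟨a, ⟨le_rfl, ht.1⟩, ha⟩
  have hS_bdd : BddAbove S := ⟨t, fun s hs => hs.1.2⟩
  obtain ⟨⟨hac, hct⟩, hc : 0 ≤ φ (sSup S)⟩ : sSup S ∈ S := hS_closed.csSup_mem hS_ne hS_bdd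
  set c := sSup S
  have hc_lt : c < t := hct.lt_of_ne fun h => (h ▸ hneg).not_ge hc
  have hneg_after : ∀ s ∈ Ioc c t, φ s < 0 := fun s hs => by
    by_contra! h
    exact hs.1.not_ge (le_csSup hS_bdd ⟨⟨hac.trans hs.1.le, hs.2⟩, h⟩)
  have hsub : Icc c t ⊆ Icc a b := Icc_subset_Icc hac ht.2
  obtain ⟨ξ, hξ, hslope⟩ := exists_hasDerivAt_eq_slope φ φ' hc_lt (hφ.mono hsub)
    fun s hs => hφ' s (Ioo_subset_Ioo hac ht.2 hs)
  have hξ_pos : 0 < φ' ξ :=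
    hpos ξ (Ioo_subset_Ioo hac ht.2 hξ) (hneg_after ξ (Ioo_subset_Ioc_self hξ))
  rw [hslope, div_pos_iff_of_pos_right (sub_pos.2 hc_lt)] at hξ_pos
  linarith

theorem HasDerivAt.hasDerivAt_comp_inner_gradient {E : Type*} [NormedAddCommGroup E]
    [InnerProductSpace ℝ E] [CompleteSpace E] {B : E → ℝ} {x : ℝ → E} {v : E} {t : ℝ}
    (hx : HasDerivAt x v t) (hB : DifferentiableAt ℝ B (x t)) :
    HasDerivAt (fun s => B (x s)) ⟪gradient B (x t), v⟫ t := by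
  rw [inner_gradient_left]
  exact hB.hasFDerivAt.comp_hasDerivAt t hx

theorem barrier_nonneg_along_solution {E : Type*} [NormedAddCommGroup E]
    [InnerProductSpace ℝ E] [CompleteSpace E] {B : E → ℝ} (hB : Differentiable ℝ B)
    {V : E → E} {α : ℝ → ℝ} (hα : ∀ s < 0, α s < 0)
    (hcbf : ∀ p, 0 ≤ ⟪gradient B p, V p⟫ + α (B p))
    {x : ℝ → E} (hx : ∀ t, 0 ≤ t → HasDerivAt x (V (x t)) t) (hx0 : 0 ≤ B (x 0)) :
    ∀ t, 0 ≤ t → 0 ≤ B (x t) := by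
  have hφ' : ∀ s, 0 ≤ s → HasDerivAt (fun s => B (x s)) ⟪gradient B (x s), V (x s)⟫ s :=
    fun s hs => (hx s hs).hasDerivAt_comp_inner_gradient (hB _)
  intro t ht
  refine nonneg_of_hasDerivAt_pos_of_neg_s2 (fun s hs => (hφ' s hs.1).continuousAt.continuousWithinAt)
    (fun s hs => hφ' s hs.1.le) hx0 (fun s _ hs => ?_) t ⟨ht, le_rfl⟩
  linarith [hcbf (x s), hα _ hs]

theorem cbf_safety_no_failure_general
    (n m : ℕ)
    (f : EuclideanSpace ℝ (Fin n) → EuclideanSpace ℝ (Fin n))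
    (g : EuclideanSpace ℝ (Fin n) → Matrix (Fin n) (Fin m) ℝ)
    (B : EuclideanSpace ℝ (Fin n) → ℝ) (hB : ContDiff ℝ 1 B)
    (α : ℝ → ℝ) (hα_mono : StrictMono α)
    (hα0 : α 0 = 0)
    (π : EuclideanSpace ℝ (Fin n) → EuclideanSpace ℝ (Fin m))
    (hcbf : ∀ p : EuclideanSpace ℝ (Fin n),
      0 ≤ ⟪gradient B p, f p +
          (EuclideanSpace.equiv (Fin n) ℝ).symm
            ((g p).mulVec (EuclideanSpace.equiv (Fin m) ℝ (π p)))⟫ + α (B p))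
    (x : ℝ → EuclideanSpace ℝ (Fin n))
    (hx : ∀ t, 0 ≤ t → HasDerivAt x
      (f (x t) + (EuclideanSpace.equiv (Fin n) ℝ).symm
        ((g (x t)).mulVec (EuclideanSpace.equiv (Fin m) ℝ (π (x t))))) t)
    (hx0 : 0 ≤ B (x 0))
    (F : Set (EuclideanSpace ℝ (Fin n)))
    (hF : Disjoint F {p : EuclideanSpace ℝ (Fin n) | 0 ≤ B p}) :
    ∀ t, 0 ≤ t → x t ∉ F := by
  have hα : ∀ s < 0, α s < 0 := fun s hs => hα0 ▸ hα_mono hs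
  have hsafe := barrier_nonneg_along_solution (hB.differentiable one_ne_zero) hα hcbf hx hx0
  exact fun t ht hxF => disjoint_left.1 hF hxF (hsafe t ht)

/-- Under the hypotheses of the forward-invariance theorem for control
barrier functions, if a failure set `F` is disjoint from the superlevel set
`{x | B x ≥ 0}`, then every closed-loop solution starting in the superlevel
set never reaches `F`. -/
theorem cbf_safety_no_failure
    (n m : ℕ)
    (f : EuclideanSpace ℝ (Fin n) → EuclideanSpace ℝ (Fin n))
    (g : EuclideanSpace ℝ (Fin n) → Matrix (Fin n) (Fin m) ℝ)
    (hf : LocallyLipschitz f) (hg : LocallyLipschitz g)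
    (B : EuclideanSpace ℝ (Fin n) → ℝ) (hB : ContDiff ℝ 1 B)
    (α : ℝ → ℝ) (hα_lip : LocallyLipschitz α) (hα_mono : StrictMono α)
    (hα0 : α 0 = 0)
    (π : EuclideanSpace ℝ (Fin n) → EuclideanSpace ℝ (Fin m))
    (hπ : LocallyLipschitz π)
    (hcbf : ∀ p : EuclideanSpace ℝ (Fin n),
      0 ≤ ⟪gradient B p, f p +
          (EuclideanSpace.equiv (Fin n) ℝ).symm
            ((g p).mulVec (EuclideanSpace.equiv (Fin m) ℝ (π p)))⟫ + α (B p))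
    (x : ℝ → EuclideanSpace ℝ (Fin n))
    (hx : ∀ t, 0 ≤ t → HasDerivAt x
      (f (x t) + (EuclideanSpace.equiv (Fin n) ℝ).symm
        ((g (x t)).mulVec (EuclideanSpace.equiv (Fin m) ℝ (π (x t))))) t)
    (hx0 : 0 ≤ B (x 0))
    (F : Set (EuclideanSpace ℝ (Fin n)))
    (hF : Disjoint F {p : EuclideanSpace ℝ (Fin n) | 0 ≤ B p}) :
    ∀ t, 0 ≤ t → x t ∉ F :=
  cbf_safety_no_failure_general n m f g B hB α hα_mono hα0 π hcbf x hx hx0 F hF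
end

section
/- Let S and A be nonempty finite types, T : S × A → S a deterministic transition function, r : S × A → ℝ, γ ∈ [0, 1), and π : S → A a policy, with Bellman operator (𝒯^π Q)(s, a) = r(s, a) + γ · Q(T(s, a), π(T(s, a))) and true Q-function Q^π its unique fixed point. Let α ≥ 0 and let w : S × A → ℝ satisfy w(s,a) ≥ 0 for all (s,a) (a nonnegative conservative penalty). If Q̂ : S × A → ℝ satisfies the penalized fixed-point equation Q̂(s,a) = (𝒯^π Q̂)(s,a) − α · w(s,a) for all (s,a), then Q̂ lower-bounds the true Q-function pointwise: Q̂(s,a) ≤ Q^π(s,a) for all (s,a). -/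
/-- The Bellman operator of a deterministic policy `π` in a deterministic
Markov decision process with transition `T`, reward `r`, and discount `γ`. -/
def bellmanOp {S A : Type*} (T : S × A → S) (r : S × A → ℝ) (γ : ℝ)
    (π : S → A) (Q : S × A → ℝ) : S × A → ℝ :=
  fun p => r p + γ * Q (T p, π (T p))

/-- CQL lower-bound property: if `Q̂` satisfies the penalized fixed-point
equation `Q̂ = 𝒯^π Q̂ − α·w` with `α ≥ 0` and a nonnegative penalty `w`,
then `Q̂` lower-bounds the true Q-function `Q^π` (the unique fixed point of
`𝒯^π`) pointwise. -/
theorem cql_lower_bound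
    (S A : Type*) [Fintype S] [Nonempty S] [Fintype A] [Nonempty A]
    (T : S × A → S) (r : S × A → ℝ) (γ : ℝ) (hγ0 : 0 ≤ γ) (hγ1 : γ < 1)
    (π : S → A)
    (Qπ : S × A → ℝ) (hQπ : bellmanOp T r γ π Qπ = Qπ)
    (α : ℝ) (hα : 0 ≤ α)
    (w : S × A → ℝ) (hw : ∀ p, 0 ≤ w p)
    (Qhat : S × A → ℝ)
    (hQhat : ∀ p, Qhat p = bellmanOp T r γ π Qhat p - α * w p) :
    ∀ p, Qhat p ≤ Qπ p := by
  set f : S × A → ℝ := fun p => Qπ p - Qhat p with hf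
  obtain ⟨p0, -, hmin⟩ := Finset.exists_min_image Finset.univ f ⟨Classical.arbitrary _,
    Finset.mem_univ _⟩
  have hrec : ∀ p, f p = γ * f (T p, π (T p)) + α * w p := by
    intro p
    have h1 : Qπ p = r p + γ * Qπ (T p, π (T p)) := (congrFun hQπ p).symm
    have h2 := hQhat p
    simp only [bellmanOp] at h2
    simp [hf, h1, h2]; ring
  have hkey : (1 - γ) * f p0 ≥ 0 := by
    have h := hrec p0
    have h2 : γ * f p0 ≤ γ * f (T p0, π (T p0)) :=
      mul_le_mul_of_nonneg_left (hmin _ (Finset.mem_univ _)) hγ0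
    nlinarith [mul_nonneg hα (hw p0)]
  have hf0 : 0 ≤ f p0 := nonneg_of_mul_nonneg_right hkey (by linarith)
  intro p
  have := hmin p (Finset.mem_univ _)
  simp only [hf] at this hf0
  linarith
end

section
/- Let S and A be nonempty finite types, T : S × A → S a deterministic transition, r : S × A → ℝ, γ ∈ [0, 1), π : S → A, with Bellman operator (𝒯^π Q)(s, a) = r(s, a) + γ · Q(T(s, a), π(T(s, a))) and Q^π its unique fixed point. Let w : S × A → ℝ be nonnegative and, for each α ≥ 0, let Q̂_α be the unique solution of Q̂_α = 𝒯^π Q̂_α − α·w. Then the family of conservative Q-functions is pointwise nonincreasing in the penalty weight: for all 0 ≤ α₁ ≤ α₂ and all (s,a), Q̂_{α₂}(s,a) ≤ Q̂_{α₁}(s,a) ≤ Q^π(s,a). -/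
lemma cql_aux {S A : Type*} [Fintype S] [Nonempty S] [Fintype A] [Nonempty A]
    (T : S × A → S) (γ : ℝ) (hγ0 : 0 ≤ γ) (hγ1 : γ < 1) (π : S → A)
    (d c : S × A → ℝ) (hc : ∀ p, 0 ≤ c p)
    (hd : ∀ p, d p = γ * d (T p, π (T p)) + c p) :
    ∀ p, 0 ≤ d p := by
  obtain ⟨p₀, hp₀⟩ := Finite.exists_min d
  intro p
  have key : 0 ≤ d p₀ := by
    have h := hd p₀
    have hmin := hp₀ (T p₀, π (T p₀))
    nlinarith [hc p₀]
  exact le_trans key (hp₀ p)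

/-- Monotonicity of the CQL fixed points in the penalty weight: if `w ≥ 0`
and, for `0 ≤ α₁ ≤ α₂`, the functions `Q̂₁`, `Q̂₂` solve
`Q̂ᵢ = 𝒯^π Q̂ᵢ − αᵢ·w`, then pointwise
`Q̂₂ ≤ Q̂₁ ≤ Q^π`, where `Q^π` is the unique fixed point of `𝒯^π`. -/
theorem cql_monotone_in_penalty
    (S A : Type*) [Fintype S] [Nonempty S] [Fintype A] [Nonempty A]
    (T : S × A → S) (r : S × A → ℝ) (γ : ℝ) (hγ0 : 0 ≤ γ) (hγ1 : γ < 1)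
    (π : S → A)
    (Qπ : S × A → ℝ) (hQπ : bellmanOp T r γ π Qπ = Qπ)
    (w : S × A → ℝ) (hw : ∀ p, 0 ≤ w p)
    (α₁ α₂ : ℝ) (hα₁ : 0 ≤ α₁) (hα₁₂ : α₁ ≤ α₂)
    (Qhat₁ Qhat₂ : S × A → ℝ)
    (hQhat₁ : ∀ p, Qhat₁ p = bellmanOp T r γ π Qhat₁ p - α₁ * w p)
    (hQhat₂ : ∀ p, Qhat₂ p = bellmanOp T r γ π Qhat₂ p - α₂ * w p) :
    ∀ p, Qhat₂ p ≤ Qhat₁ p ∧ Qhat₁ p ≤ Qπ p := by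
  have h1 : ∀ p, 0 ≤ Qhat₁ p - Qhat₂ p := by
    apply cql_aux T γ hγ0 hγ1 π _ (fun p => (α₂ - α₁) * w p)
    · intro p; exact mul_nonneg (by linarith) (hw p)
    · intro p
      have h₁ := hQhat₁ p; have h₂ := hQhat₂ p
      simp only [bellmanOp] at h₁ h₂ ⊢
      ring_nf
      ring_nf at h₁ h₂
      linarith
  have h2 : ∀ p, 0 ≤ Qπ p - Qhat₁ p := by
    apply cql_aux T γ hγ0 hγ1 π _ (fun p => α₁ * w p)
    · intro p; exact mul_nonneg hα₁ (hw p)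
    · intro p
      have h₁ := hQhat₁ p
      have h₂ : Qπ p = bellmanOp T r γ π Qπ p := by rw [hQπ]
      simp only [bellmanOp] at h₁ h₂ ⊢
      ring_nf
      ring_nf at h₁ h₂
      linarith
  intro p
  exact ⟨by linarith [h1 p], by linarith [h2 p]⟩
end
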